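/- arXiv:2102.05840 — 7 statements merged into one kernel-verified Lean document; each statement's English description precedes it below -/
import Mathlib

section
/- Let X be a separable, complete Heine-Borel metric space (i.e., every closed bounded subset of X is compact), let (ν_n) be a sequence of finite Borel measures on X and ν a finite Borel measure on X. Then (ν_n) converges vaguely to ν (i.e., ∫_X f dν_n → ∫_X f dν for every continuous f : X → ℝ with compact support) if and only if: limsup_{n→∞} ν_n(A) ≤ ν(A) for every bounded closed set A ⊆ X, and liminf_{n→∞} ν_n(B) ≥ ν(B) for every bounded open set B ⊆ X. -/
open MeasureTheory Filter Topology Metric Set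
open scoped ENNReal NNReal

/-- Vague convergence on a separable complete Heine-Borel metric space is equivalent to the
upper bound on bounded closed sets and the lower bound on bounded open sets. -/
theorem stmt0 {X : Type*} [MetricSpace X] [TopologicalSpace.SeparableSpace X] [CompleteSpace X]
    [MeasurableSpace X] [BorelSpace X]
    (hHB : ∀ s : Set X, IsClosed s → Bornology.IsBounded s → IsCompact s)
    (ν : ℕ → Measure X) (μ : Measure X)
    (hν : ∀ n, IsFiniteMeasure (ν n)) (hμ : IsFiniteMeasure μ) :
    (∀ f : X → ℝ, Continuous f → HasCompactSupport f →
        Tendsto (fun n => ∫ x, f x ∂(ν n)) atTop (𝓝 (∫ x, f x ∂μ)))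
      ↔
    ((∀ A : Set X, IsClosed A → Bornology.IsBounded A →
        limsup (fun n => ν n A) atTop ≤ μ A) ∧
     (∀ B : Set X, IsOpen B → Bornology.IsBounded B →
        μ B ≤ liminf (fun n => ν n B) atTop)) := by
  haveI := hμ
  constructor
  · intro h
    -- From the real integral convergence we get lintegral convergence for nonneg functions.
    have hlin : ∀ g : X → ℝ, Continuous g → HasCompactSupport g → (∀ x, 0 ≤ g x) →
        Tendsto (fun n => ∫⁻ x, ENNReal.ofReal (g x) ∂(ν n)) atTop
          (𝓝 (∫⁻ x, ENNReal.ofReal (g x) ∂μ)) := by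
      intro g hg hgs hgnn
      have e2 : ENNReal.ofReal (∫ x, g x ∂μ) = ∫⁻ x, ENNReal.ofReal (g x) ∂μ :=
        ofReal_integral_eq_lintegral_ofReal (hg.integrable_of_hasCompactSupport hgs)
          (Eventually.of_forall hgnn)
      have e1 : ∀ n, ENNReal.ofReal (∫ x, g x ∂(ν n)) = ∫⁻ x, ENNReal.ofReal (g x) ∂(ν n) := by
        intro n
        haveI := hν n
        exact ofReal_integral_eq_lintegral_ofReal (hg.integrable_of_hasCompactSupport hgs)
          (Eventually.of_forall hgnn)
      have h1 := (ENNReal.continuous_ofReal.tendsto (∫ x, g x ∂μ)).comp (h g hg hgs)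
      rw [e2] at h1
      exact h1.congr e1
    constructor
    · -- closed bounded sets
      intro A hA hAb
      have key : ∀ δ : ℝ, 0 < δ →
          limsup (fun n => ν n A) atTop ≤ μ (Metric.cthickening δ A) := by
        intro δ hδ
        set g : X → ℝ := fun x => (thickenedIndicator hδ A x : ℝ) with hgdef
        have hgcont : Continuous g :=
          NNReal.continuous_coe.comp (thickenedIndicator hδ A).continuous
        have hgz : ∀ x, x ∉ Metric.cthickening δ A → g x = 0 := by
          intro x hx
          have hx' : x ∉ Metric.thickening δ A := fun h' =>
            hx (Metric.thickening_subset_cthickening δ A h')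
          show ((thickenedIndicator hδ A x : ℝ≥0) : ℝ) = 0
          rw [thickenedIndicator_zero hδ A hx']
          simp
        have hgs : HasCompactSupport g := HasCompactSupport.intro
          (hHB _ Metric.isClosed_cthickening hAb.cthickening) hgz
        have hgnn : ∀ x, 0 ≤ g x := fun x => (thickenedIndicator hδ A x).coe_nonneg
        have hofg : ∀ x, ENNReal.ofReal (g x) = (thickenedIndicator hδ A x : ℝ≥0∞) := fun x =>
          ENNReal.ofReal_coe_nnreal
        have hlim := hlin g hgcont hgs hgnn
        calc limsup (fun n => ν n A) atTop
            ≤ limsup (fun n => ∫⁻ x, ENNReal.ofReal (g x) ∂(ν n)) atTop := by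
              refine limsup_le_limsup (Eventually.of_forall fun n => ?_)
              have := measure_le_lintegral_thickenedIndicator (ν n) hA.measurableSet hδ
              simpa only [hofg] using this
          _ = ∫⁻ x, ENNReal.ofReal (g x) ∂μ := hlim.limsup_eq
          _ ≤ μ (Metric.cthickening δ A) := by
              apply lintegral_le_meas
              · intro x
                rw [hofg]
                exact_mod_cast thickenedIndicator_le_one hδ A x
              · intro x hx
                simp [hgz x hx]
      have hth := tendsto_measure_cthickening_of_isClosed (μ := μ)
        ⟨1, one_pos, measure_ne_top μ _⟩ hA
      refine ge_of_tendsto (hth.mono_left nhdsWithin_le_nhds :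
        Tendsto (fun δ : ℝ => μ (Metric.cthickening δ A)) (𝓝[>] 0) (𝓝 (μ A))) ?_
      filter_upwards [self_mem_nhdsWithin] with δ hδ
      exact key δ hδ
    · -- open bounded sets
      intro B hB hBb
      rw [hB.measure_eq_iSup_isClosed]
      refine iSup_le fun F => iSup_le fun hFB => iSup_le fun hF => ?_
      have hFc : IsCompact F := hHB F hF (hBb.subset hFB)
      obtain ⟨δ, hδ, hsub⟩ := hFc.exists_cthickening_subset_open hB hFB
      set g : X → ℝ := fun x => (thickenedIndicator hδ F x : ℝ) with hgdef
      have hgcont : Continuous g :=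
        NNReal.continuous_coe.comp (thickenedIndicator hδ F).continuous
      have hgz : ∀ x, x ∉ Metric.cthickening δ F → g x = 0 := by
        intro x hx
        have hx' : x ∉ Metric.thickening δ F := fun h' =>
          hx (Metric.thickening_subset_cthickening δ F h')
        show ((thickenedIndicator hδ F x : ℝ≥0) : ℝ) = 0
        rw [thickenedIndicator_zero hδ F hx']
        simp
      have hgs : HasCompactSupport g := HasCompactSupport.intro
        (hHB _ Metric.isClosed_cthickening hFc.isBounded.cthickening) hgz
      have hgnn : ∀ x, 0 ≤ g x := fun x => (thickenedIndicator hδ F x).coe_nonneg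
      have hofg : ∀ x, ENNReal.ofReal (g x) = (thickenedIndicator hδ F x : ℝ≥0∞) := fun x =>
        ENNReal.ofReal_coe_nnreal
      have hlim := hlin g hgcont hgs hgnn
      calc μ F ≤ ∫⁻ x, ENNReal.ofReal (g x) ∂μ := by
            have := measure_le_lintegral_thickenedIndicator μ hF.measurableSet hδ
            simpa only [hofg] using this
        _ = liminf (fun n => ∫⁻ x, ENNReal.ofReal (g x) ∂(ν n)) atTop := hlim.liminf_eq.symm
        _ ≤ liminf (fun n => ν n B) atTop := by
            refine liminf_le_liminf (Eventually.of_forall fun n => ?_)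
            apply lintegral_le_meas
            · intro x
              rw [hofg]
              exact_mod_cast thickenedIndicator_le_one hδ F x
            · intro x hx
              simp [hgz x fun h' => hx (hsub h')]
  · rintro ⟨hcl, hop⟩ f hf hfs
    have main : ∀ g : X → ℝ, Continuous g → HasCompactSupport g → (∀ x, 0 ≤ g x) →
        Tendsto (fun n => ∫ x, g x ∂(ν n)) atTop (𝓝 (∫ x, g x ∂μ)) := by
      intro g hg hgs hgnn
      have hgnn' : ∀ ρ : Measure X, 0 ≤ᵐ[ρ] g := fun ρ => Eventually.of_forall hgnn
      set K := tsupport g with hK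
      have hKb : Bornology.IsBounded K := hgs.isBounded
      obtain ⟨M, hM⟩ := hgs.exists_bound_of_continuous hg
      have hM' : ∀ x, g x ≤ M := fun x =>
        (le_abs_self _).trans (by simpa [Real.norm_eq_abs] using hM x)
      have hsub : ∀ t : ℝ, 0 < t → {a | t ≤ g a} ⊆ K := by
        intro t ht a ha
        have : g a ≠ 0 := by
          intro h0
          rw [mem_setOf_eq, h0] at ha
          linarith
        exact subset_tsupport g this
      have hsubo : ∀ t : ℝ, 0 < t → {a | t < g a} ⊆ K := by
        intro t ht a ha
        have : g a ≠ 0 := by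
          intro h0
          rw [mem_setOf_eq, h0] at ha
          linarith
        exact subset_tsupport g this
      set A1 := Metric.cthickening 1 K with hA1
      have hKA1 : K ⊆ A1 := Metric.self_subset_cthickening K
      have hA1cl : IsClosed A1 := Metric.isClosed_cthickening
      have hA1b : Bornology.IsBounded A1 := hKb.cthickening
      have hC : μ A1 + 1 ≠ ⊤ := ENNReal.add_ne_top.mpr ⟨measure_ne_top μ _, ENNReal.one_ne_top⟩
      have hlt : limsup (fun n => ν n A1) atTop < μ A1 + 1 :=
        lt_of_le_of_lt (hcl A1 hA1cl hA1b)
          (ENNReal.lt_add_right (measure_ne_top μ _) one_ne_zero)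
      obtain ⟨N, hN⟩ := eventually_atTop.mp (eventually_lt_of_limsup_lt hlt)
      have hlc : ∀ ρ : Measure X,
          ∫⁻ x, ENNReal.ofReal (g x) ∂ρ = ∫⁻ t in Set.Ioi (0:ℝ), ρ {a | t ≤ g a} :=
        fun ρ => lintegral_eq_lintegral_meas_le ρ (hgnn' ρ) hg.aemeasurable
      have hlc' : ∀ ρ : Measure X,
          ∫⁻ x, ENNReal.ofReal (g x) ∂ρ = ∫⁻ t in Set.Ioi (0:ℝ), ρ {a | t < g a} :=
        fun ρ => lintegral_eq_lintegral_meas_lt ρ (hgnn' ρ) hg.aemeasurable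
      have hmeas_le : ∀ ρ : Measure X, Measurable fun t : ℝ => ρ {a | t ≤ g a} := by
        intro ρ
        apply Antitone.measurable
        intro s t hst
        exact measure_mono fun a ha => le_trans hst ha
      have hmeas_lt : ∀ ρ : Measure X, Measurable fun t : ℝ => ρ {a | t < g a} := by
        intro ρ
        apply Antitone.measurable
        intro s t hst
        exact measure_mono fun a ha => lt_of_le_of_lt hst ha
      have key : Tendsto (fun n => ∫⁻ x, ENNReal.ofReal (g x) ∂(ν n)) atTop
          (𝓝 (∫⁻ x, ENNReal.ofReal (g x) ∂μ)) := by
        refine tendsto_of_le_liminf_of_limsup_le ?_ ?_ isBounded_le_of_top isBounded_ge_of_bot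
        · -- lower bound via open sets
          rw [hlc' μ]
          have eq1 : (fun n => ∫⁻ t in Set.Ioi (0:ℝ), ν n {a | t < g a}) =
              fun n => ∫⁻ x, ENNReal.ofReal (g x) ∂(ν n) := funext fun n => (hlc' (ν n)).symm
          calc ∫⁻ t in Set.Ioi (0:ℝ), μ {a | t < g a}
              ≤ ∫⁻ t in Set.Ioi (0:ℝ), liminf (fun n => ν n {a | t < g a}) atTop := by
                refine lintegral_mono_ae ((ae_restrict_iff' measurableSet_Ioi).mpr
                  (Eventually.of_forall fun t ht => ?_))
                exact hop _ (isOpen_lt continuous_const hg) (hKb.subset (hsubo t ht))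
            _ ≤ liminf (fun n => ∫⁻ t in Set.Ioi (0:ℝ), ν n {a | t < g a}) atTop :=
                lintegral_liminf_le fun n => hmeas_lt (ν n)
            _ = liminf (fun n => ∫⁻ x, ENNReal.ofReal (g x) ∂(ν n)) atTop := by rw [eq1]
        · -- upper bound via closed sets
          rw [← limsup_nat_add (fun n => ∫⁻ x, ENNReal.ofReal (g x) ∂(ν n)) N]
          set bound : ℝ → ℝ≥0∞ := (Set.Ioc (0:ℝ) M).indicator (fun _ => μ A1 + 1) with hbound
          have hb1 : ∀ i, (fun t : ℝ => ν (i + N) {a | t ≤ g a})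
              ≤ᵐ[volume.restrict (Set.Ioi 0)] bound := by
            intro i
            refine (ae_restrict_iff' measurableSet_Ioi).mpr
              (Eventually.of_forall fun t ht => ?_)
            by_cases htM : t ≤ M
            · calc ν (i + N) {a | t ≤ g a} ≤ ν (i + N) A1 :=
                    measure_mono ((hsub t ht).trans hKA1)
                _ ≤ μ A1 + 1 := le_of_lt (hN (i + N) (Nat.le_add_left N i))
                _ = bound t := by rw [hbound, Set.indicator_of_mem (Set.mem_Ioc.mpr ⟨ht, htM⟩)]
            · have hempty : {a | t ≤ g a} = ∅ := by
                ext a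
                simp only [mem_setOf_eq, mem_empty_iff_false, iff_false, not_le]
                exact lt_of_le_of_lt (hM' a) (lt_of_not_ge htM)
              simp [hempty]
          have hbfin : ∫⁻ t in Set.Ioi (0:ℝ), bound t ≠ ⊤ := by
            rw [hbound, lintegral_indicator measurableSet_Ioc, setLIntegral_const,
              Measure.restrict_apply measurableSet_Ioc]
            exact ENNReal.mul_ne_top hC
              (ne_top_of_le_ne_top measure_Ioc_lt_top.ne (measure_mono inter_subset_left))
          have hstep := limsup_lintegral_le (μ := volume.restrict (Set.Ioi (0:ℝ)))
            (f := fun i => fun t : ℝ => ν (i + N) {a | t ≤ g a}) bound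
            (fun i => hmeas_le (ν (i + N))) hb1 hbfin
          calc limsup (fun i => ∫⁻ x, ENNReal.ofReal (g x) ∂(ν (i + N))) atTop
              = limsup (fun i => ∫⁻ t in Set.Ioi (0:ℝ), ν (i + N) {a | t ≤ g a}) atTop := by
                congr 1
                exact funext fun i => hlc (ν (i + N))
            _ ≤ ∫⁻ t in Set.Ioi (0:ℝ), limsup (fun i => ν (i + N) {a | t ≤ g a}) atTop := hstep
            _ ≤ ∫⁻ t in Set.Ioi (0:ℝ), μ {a | t ≤ g a} := by
                refine lintegral_mono_ae ((ae_restrict_iff' measurableSet_Ioi).mpr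
                  (Eventually.of_forall fun t ht => ?_))
                rw [limsup_nat_add (fun n => ν n {a | t ≤ g a}) N]
                exact hcl _ (isClosed_le continuous_const hg) (hKb.subset (hsub t ht))
            _ = ∫⁻ x, ENNReal.ofReal (g x) ∂μ := (hlc μ).symm
      have hfin : ∫⁻ x, ENNReal.ofReal (g x) ∂μ ≠ ⊤ := by
        rw [← ofReal_integral_eq_lintegral_ofReal
          (hg.integrable_of_hasCompactSupport hgs) (hgnn' μ)]
        exact ENNReal.ofReal_ne_top
      have hT := (ENNReal.tendsto_toReal hfin).comp key
      have e : ∀ ρ : Measure X, ∫ x, g x ∂ρ = (∫⁻ x, ENNReal.ofReal (g x) ∂ρ).toReal :=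
        fun ρ => integral_eq_lintegral_of_nonneg_ae (hgnn' ρ) hg.aestronglyMeasurable
      rw [show (∫ x, g x ∂μ) = (∫⁻ x, ENNReal.ofReal (g x) ∂μ).toReal from e μ]
      exact hT.congr fun n => (e (ν n)).symm
    -- decompose f into positive and negative parts
    set p : X → ℝ := fun x => max (f x) 0 with hp
    set q : X → ℝ := fun x => max (-f x) 0 with hq
    have hpc : Continuous p := hf.max continuous_const
    have hqc : Continuous q := hf.neg.max continuous_const
    have hps : HasCompactSupport p := hfs.comp_left (g := fun y => max y 0) (by simp)
    have hqs : HasCompactSupport q := hfs.comp_left (g := fun y => max (-y) 0) (by simp)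
    have hT := (main p hpc hps fun x => le_max_right _ _).sub
      (main q hqc hqs fun x => le_max_right _ _)
    have e : ∀ (ρ : Measure X) (_ : IsFiniteMeasure ρ),
        ∫ x, p x ∂ρ - ∫ x, q x ∂ρ = ∫ x, f x ∂ρ := by
      intro ρ hρ
      rw [← integral_sub (hpc.integrable_of_hasCompactSupport hps)
        (hqc.integrable_of_hasCompactSupport hqs)]
      congr 1
      funext x
      exact max_zero_sub_max_neg_zero_eq_self (f x)
    rw [show (∫ x, f x ∂μ) = ∫ x, p x ∂μ - ∫ x, q x ∂μ from (e μ hμ).symm]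
    exact hT.congr fun n => e (ν n) (hν n)
end

section
/- Let X be a separable, complete Heine-Borel metric space (i.e., every closed bounded subset of X is compact), let (ν_n) be a sequence of finite Borel measures on X and ν a finite Borel measure on X. Then (ν_n) converges vaguely to ν if and only if lim_{n→∞} ν_n(A) = ν(A) for every bounded Borel set A ⊆ X with ν(∂A) = 0. -/
/-!
For a compact set `K` inside an open set `U`, an Urysohn function squeezed between their
indicators gives `μ K ≤ liminf νₙ U` and `limsup νₙ K ≤ μ U`. Inner and outer regularity of `μ`
turn these into `μ (interior A) ≤ liminf νₙ (interior A)` and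
`limsup νₙ (closure A) ≤ μ (closure A)`, and for a continuity set `A` both bounds equal `μ A`.

Conversely, for `g ≥ 0` the layer-cake formula writes `∫ g dνₙ` as `∫₀^∞ νₙ {g > t} dt`. Since
`frontier {g > t} ⊆ {g = t}`, the superlevel set `{g > t}` is a bounded continuity set of `μ`
for all but countably many `t`. These sets all lie in one bounded continuity set `B` (a closed
thickening of the support of `g`, with a radius avoiding the countably many atoms of
`x ↦ infDist x (tsupport g)`), and `νₙ B → μ B < ∞` gives the eventual domination needed for
dominated convergence.
-/

open MeasureTheory Filter Topology Metric Set Bornology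

section Vague

variable {X : Type*} [TopologicalSpace X] [MeasurableSpace X] {ι : Type*}

def TendstoVaguely (ν : ι → Measure X) (μ : Measure X) (l : Filter ι) : Prop :=
  ∀ f : X → ℝ, Continuous f → HasCompactSupport f →
    Tendsto (fun i => ∫ x, f x ∂ν i) l (𝓝 (∫ x, f x ∂μ))

variable {ν : ι → Measure X} {μ : Measure X} {l : Filter ι}

theorem tendstoVaguely_iff_forall_tendsto_lintegral [OpensMeasurableSpace X]
    [∀ i, IsFiniteMeasureOnCompacts (ν i)] [IsFiniteMeasureOnCompacts μ] :
    TendstoVaguely ν μ l ↔ ∀ g : X → ℝ, Continuous g → HasCompactSupport g → 0 ≤ g →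
      Tendsto (fun i => ∫⁻ x, ENNReal.ofReal (g x) ∂ν i) l
        (𝓝 (∫⁻ x, ENNReal.ofReal (g x) ∂μ)) := by
  constructor
  · intro h g hg hgc hg0
    simp_rw [← ofReal_integral_eq_lintegral_ofReal (hg.integrable_of_hasCompactSupport hgc)
      (ae_of_all _ hg0)]
    exact (ENNReal.continuous_ofReal.tendsto _).comp (h g hg hgc)
  intro h
  have tendsto_of_nonneg : ∀ g : X → ℝ, Continuous g → HasCompactSupport g → 0 ≤ g →
      Tendsto (fun i => ∫ x, g x ∂ν i) l (𝓝 (∫ x, g x ∂μ)) := by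
    intro g hg hgc hg0
    simp_rw [integral_eq_lintegral_of_nonneg_ae (ae_of_all _ hg0) hg.aestronglyMeasurable]
    exact (ENNReal.tendsto_toReal
      (hg.integrable_of_hasCompactSupport hgc).lintegral_lt_top.ne).comp (h g hg hgc hg0)
  intro f hf hfc
  have hpos_cont : Continuous fun x => max (f x) 0 := hf.max continuous_const
  have hneg_cont : Continuous fun x => max (-f x) 0 := hf.neg.max continuous_const
  have hpos_supp : HasCompactSupport fun x => max (f x) 0 :=
    hfc.comp_left (g := fun y => max y 0) (max_self 0)
  have hneg_supp : HasCompactSupport fun x => max (-f x) 0 :=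
    hfc.neg.comp_left (g := fun y => max y 0) (max_self 0)
  have integral_eq (m : Measure X) [IsFiniteMeasureOnCompacts m] :
      ∫ x, f x ∂m = ∫ x, max (f x) 0 ∂m - ∫ x, max (-f x) 0 ∂m := by
    rw [← integral_sub (hpos_cont.integrable_of_hasCompactSupport hpos_supp)
      (hneg_cont.integrable_of_hasCompactSupport hneg_supp)]
    simp_rw [max_zero_sub_max_neg_zero_eq_self]
  simp_rw [integral_eq]
  exact (tendsto_of_nonneg _ hpos_cont hpos_supp fun x => le_max_right _ _).sub
    (tendsto_of_nonneg _ hneg_cont hneg_supp fun x => le_max_right _ _)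

theorem exists_continuous_hasCompactSupport_measure_le_lintegral_le [R1Space X]
    [LocallyCompactSpace X] [OpensMeasurableSpace X] {K U : Set X} (hK : IsCompact K)
    (hU : IsOpen U) (hKU : K ⊆ U) :
    ∃ f : X → ℝ, Continuous f ∧ HasCompactSupport f ∧ 0 ≤ f ∧ ∀ m : Measure X,
      m K ≤ ∫⁻ x, ENNReal.ofReal (f x) ∂m ∧ ∫⁻ x, ENNReal.ofReal (f x) ∂m ≤ m U := by
  obtain ⟨f, hfK, hfU, hfc, hf01⟩ := exists_continuous_one_zero_of_isCompact hK
    hU.isClosed_compl (disjoint_compl_right_iff_subset.mpr hKU)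
  refine ⟨f, f.continuous, hfc, fun x => (hf01 x).1, fun m => ⟨?_, ?_⟩⟩
  · calc m K ≤ m {x | 1 ≤ ENNReal.ofReal (f x)} := measure_mono fun x hx => by simp [hfK hx]
      _ ≤ ∫⁻ x, ENNReal.ofReal (f x) ∂m := by
        simpa using mul_meas_ge_le_lintegral (μ := m) f.continuous.measurable.ennreal_ofReal 1
  · rw [← lintegral_indicator_one hU.measurableSet]
    refine lintegral_mono fun x => ?_
    by_cases hx : x ∈ U
    · simpa [hx] using (hf01 x).2
    · simp [hx, hfU hx]

namespace TendstoVaguely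

variable [R1Space X] [LocallyCompactSpace X] [OpensMeasurableSpace X] [l.NeBot]
  [∀ i, IsFiniteMeasureOnCompacts (ν i)]

theorem measure_le_liminf [IsFiniteMeasureOnCompacts μ] (h : TendstoVaguely ν μ l)
    {K U : Set X} (hK : IsCompact K) (hU : IsOpen U) (hKU : K ⊆ U) :
    μ K ≤ liminf (fun i => ν i U) l := by
  obtain ⟨f, hf, hfc, hf0, hfKU⟩ :=
    exists_continuous_hasCompactSupport_measure_le_lintegral_le hK hU hKU
  have hlim := tendstoVaguely_iff_forall_tendsto_lintegral.mp h f hf hfc hf0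
  calc μ K ≤ ∫⁻ x, ENNReal.ofReal (f x) ∂μ := (hfKU μ).1
    _ = liminf (fun i => ∫⁻ x, ENNReal.ofReal (f x) ∂ν i) l := hlim.liminf_eq.symm
    _ ≤ liminf (fun i => ν i U) l := liminf_le_liminf (.of_forall fun i => (hfKU (ν i)).2)

theorem limsup_le_measure [IsFiniteMeasureOnCompacts μ] (h : TendstoVaguely ν μ l)
    {K U : Set X} (hK : IsCompact K) (hU : IsOpen U) (hKU : K ⊆ U) :
    limsup (fun i => ν i K) l ≤ μ U := by
  obtain ⟨f, hf, hfc, hf0, hfKU⟩ :=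
    exists_continuous_hasCompactSupport_measure_le_lintegral_le hK hU hKU
  have hlim := tendstoVaguely_iff_forall_tendsto_lintegral.mp h f hf hfc hf0
  calc limsup (fun i => ν i K) l
      ≤ limsup (fun i => ∫⁻ x, ENNReal.ofReal (f x) ∂ν i) l :=
        limsup_le_limsup (.of_forall fun i => (hfKU (ν i)).1)
    _ = ∫⁻ x, ENNReal.ofReal (f x) ∂μ := hlim.limsup_eq
    _ ≤ μ U := (hfKU μ).2

variable [μ.Regular]

theorem measure_le_liminf_of_isOpen (h : TendstoVaguely ν μ l) {U : Set X} (hU : IsOpen U) :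
    μ U ≤ liminf (fun i => ν i U) l := by
  rw [hU.measure_eq_iSup_isCompact μ]
  exact iSup₂_le fun K hKU => iSup_le fun hK => h.measure_le_liminf hK hU hKU

theorem limsup_le_measure_of_isCompact (h : TendstoVaguely ν μ l) {K : Set X}
    (hK : IsCompact K) : limsup (fun i => ν i K) l ≤ μ K := by
  rw [K.measure_eq_iInf_isOpen μ]
  exact le_iInf₂ fun U hKU => le_iInf fun hU => h.limsup_le_measure hK hU hKU

theorem tendsto_measure_of_null_frontier (h : TendstoVaguely ν μ l) {A : Set X}
    (hA : IsCompact (closure A)) (hAf : μ (frontier A) = 0) :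
    Tendsto (fun i => ν i A) l (𝓝 (μ A)) :=
  tendsto_measure_of_le_liminf_measure_of_limsup_measure_le interior_subset subset_closure hAf
    (h.measure_le_liminf_of_isOpen isOpen_interior) (h.limsup_le_measure_of_isCompact hA)

end TendstoVaguely

end Vague

theorem ae_measure_level_set_eq_zero {X : Type*} [MeasurableSpace X] (μ : Measure X) [SFinite μ]
    {φ : X → ℝ} (hφ : Measurable φ) : ∀ᵐ t, μ {x | φ x = t} = 0 := by
  have := (Measure.countable_meas_level_set_pos (μ := μ) hφ).measure_zero volume
  filter_upwards [measure_eq_zero_iff_ae_notMem.mp this] with t ht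
  simpa using ht

section Metric

variable {X : Type*} [PseudoMetricSpace X] [MeasurableSpace X] [OpensMeasurableSpace X]

theorem exists_isClosed_isBounded_null_frontier_superset (μ : Measure X) [SFinite μ]
    {K : Set X} (hK : IsBounded K) :
    ∃ B, K ⊆ B ∧ IsClosed B ∧ IsBounded B ∧ μ (frontier B) = 0 := by
  have : (ae (volume.restrict (Ioi (0 : ℝ)))).NeBot := ae_neBot.2 (by simp)
  have hlevel := ae_measure_level_set_eq_zero μ (continuous_infDist_pt K).measurable
  obtain ⟨r, hr : 0 < r, hnull⟩ :=
    ((ae_restrict_mem (measurableSet_Ioi (a := (0 : ℝ)))).and (ae_restrict_of_ae hlevel)).exists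
  refine ⟨cthickening r K, self_subset_cthickening K, isClosed_cthickening, hK.cthickening,
    measure_mono_null (fun x hx => ?_) hnull⟩
  have hx' : infEDist x K = ENNReal.ofReal r := frontier_cthickening_subset K hx
  simp [infDist, hx', hr.le]

end Metric

section Proper

variable {X : Type*} [PseudoMetricSpace X] [ProperSpace X] [MeasurableSpace X]
  {ι : Type*} {ν : ι → Measure X} {μ : Measure X} {l : Filter ι}

theorem tendsto_lintegral_of_tendsto_measure_of_null_frontier [OpensMeasurableSpace X]
    [IsFiniteMeasureOnCompacts μ] [l.IsCountablyGenerated]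
    (h : ∀ A : Set X, MeasurableSet A → IsBounded A → μ (frontier A) = 0 →
      Tendsto (fun i => ν i A) l (𝓝 (μ A)))
    {g : X → ℝ} (hg : Continuous g) (hgc : HasCompactSupport g) (hg0 : 0 ≤ g) :
    Tendsto (fun i => ∫⁻ x, ENNReal.ofReal (g x) ∂ν i) l
      (𝓝 (∫⁻ x, ENNReal.ofReal (g x) ∂μ)) := by
  obtain ⟨B, hgB, hBc, hBb, hBf⟩ :=
    exists_isClosed_isBounded_null_frontier_superset μ hgc.isCompact.isBounded
  obtain ⟨M, hM⟩ := hg.bounded_above_of_compact_support hgc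
  have superlevel_subset : ∀ t : ℝ, 0 < t → {x | t < g x} ⊆ B := fun t ht x hx =>
    hgB (subset_tsupport g (ht.trans hx).ne')
  have superlevel_empty : ∀ t : ℝ, M ≤ t → {x | t < g x} = ∅ := fun t ht =>
    eq_empty_of_forall_notMem fun x hx =>
      (ht.trans_lt hx).not_ge ((Real.le_norm_self _).trans (hM x))
  have hμB : μ B ≠ ⊤ := (isCompact_of_isClosed_isBounded hBc hBb).measure_lt_top.ne
  simp_rw [lintegral_eq_lintegral_meas_lt _ (ae_of_all _ hg0) hg.aemeasurable]
  refine tendsto_lintegral_filter_of_dominated_convergence ((Ioc 0 M).indicator fun _ => μ B + 1)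
    (.of_forall fun i => Antitone.measurable fun s t hst =>
      measure_mono fun x hx => hst.trans_lt hx)
    ?_ ?_ ?_
  · filter_upwards [(h B hBc.measurableSet hBb hBf).eventually_lt_const
      (ENNReal.lt_add_right hμB one_ne_zero)] with i hi
    filter_upwards [ae_restrict_mem measurableSet_Ioi] with t ht
    rcases le_or_gt M t with htM | htM
    · simp [superlevel_empty t htM]
    · rw [indicator_of_mem (show t ∈ Ioc 0 M from ⟨ht, htM.le⟩)]
      exact (measure_mono (superlevel_subset t ht)).trans hi.le
  · rw [lintegral_indicator_const measurableSet_Ioc]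
    exact ENNReal.mul_ne_top (by finiteness)
      (ne_top_of_le_ne_top (by simp) (Measure.restrict_apply_le _ _))
  · filter_upwards [ae_restrict_mem measurableSet_Ioi,
      ae_restrict_of_ae (ae_measure_level_set_eq_zero μ hg.measurable)] with t ht hnull
    exact h _ (isOpen_lt continuous_const hg).measurableSet (hBb.subset (superlevel_subset t ht))
      (measure_mono_null (fun x hx => (frontier_lt_subset_eq continuous_const hg hx).symm) hnull)

theorem tendstoVaguely_iff_tendsto_measure_of_null_frontier [BorelSpace X]
    [∀ i, IsFiniteMeasureOnCompacts (ν i)] [IsFiniteMeasureOnCompacts μ] [l.IsCountablyGenerated]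
    [l.NeBot] :
    TendstoVaguely ν μ l ↔ ∀ A : Set X, MeasurableSet A → IsBounded A → μ (frontier A) = 0 →
      Tendsto (fun i => ν i A) l (𝓝 (μ A)) := by
  refine ⟨fun h A _ hA hAf => h.tendsto_measure_of_null_frontier hA.isCompact_closure hAf,
    fun h => ?_⟩
  rw [tendstoVaguely_iff_forall_tendsto_lintegral]
  exact fun g hg hgc hg0 => tendsto_lintegral_of_tendsto_measure_of_null_frontier h hg hgc hg0

end Proper

theorem stmt2_general {X : Type*} [MetricSpace X]
    [MeasurableSpace X] [BorelSpace X]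
    (hHB : ∀ s : Set X, IsClosed s → Bornology.IsBounded s → IsCompact s)
    (ν : ℕ → Measure X) (μ : Measure X)
    (hν : ∀ n, IsFiniteMeasure (ν n)) (hμ : IsFiniteMeasure μ) :
    (∀ f : X → ℝ, Continuous f → HasCompactSupport f →
        Tendsto (fun n => ∫ x, f x ∂(ν n)) atTop (𝓝 (∫ x, f x ∂μ)))
      ↔
    (∀ A : Set X, MeasurableSet A → Bornology.IsBounded A → μ (frontier A) = 0 →
        Tendsto (fun n => ν n A) atTop (𝓝 (μ A))) := by
  have : ProperSpace X := ⟨fun x r => hHB _ isClosed_closedBall isBounded_closedBall⟩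
  exact tendstoVaguely_iff_tendsto_measure_of_null_frontier

/-- Vague convergence on a separable complete Heine-Borel metric space is equivalent to
convergence on bounded continuity sets. -/
theorem stmt2 {X : Type*} [MetricSpace X] [TopologicalSpace.SeparableSpace X] [CompleteSpace X]
    [MeasurableSpace X] [BorelSpace X]
    (hHB : ∀ s : Set X, IsClosed s → Bornology.IsBounded s → IsCompact s)
    (ν : ℕ → Measure X) (μ : Measure X)
    (hν : ∀ n, IsFiniteMeasure (ν n)) (hμ : IsFiniteMeasure μ) :
    (∀ f : X → ℝ, Continuous f → HasCompactSupport f →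
        Tendsto (fun n => ∫ x, f x ∂(ν n)) atTop (𝓝 (∫ x, f x ∂μ)))
      ↔
    (∀ A : Set X, MeasurableSet A → Bornology.IsBounded A → μ (frontier A) = 0 →
        Tendsto (fun n => ν n A) atTop (𝓝 (μ A))) :=
  stmt2_general hHB ν μ hν hμ
end

section
/- Let X be a metric space, let (ν_n) be a sequence of finite Borel measures on X and ν a finite Borel measure on X. Then the following are equivalent: (I) ν_n converges to ν setwise, i.e., lim_{n→∞} ν_n(A) = ν(A) for every Borel set A ⊆ X; (II) lim_{n→∞} ν_n(B) = ν(B) for every open set B ⊆ X; (III) lim_{n→∞} ν_n(A) = ν(A) for every closed set A ⊆ X. -/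
open MeasureTheory Filter Topology Set ENNReal

/-!
Closed and open sets are exchanged by complementation, and `ν A = ν univ - ν Aᶜ` once the total
masses are finite (eventually true for `ν n`, since `ν n univ → μ univ < ∞`); this gives (II) ⇔ (III).
For (II) ⇒ (I), a finite Borel measure on a metric space is weakly regular: a Borel set `A` is
approximated from inside by closed sets and from outside by open sets, and convergence on those
squeezes `ν n A` to `μ A`.
-/

section

variable {ι α : Type*} {l : Filter ι} [MeasurableSpace α] {ν : ι → Measure α} {μ : Measure α}

theorem tendsto_measure_of_tendsto_measure_compl [IsFiniteMeasure μ] {s : Set α}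
    (hs : MeasurableSet s) (huniv : Tendsto (fun i => ν i univ) l (𝓝 (μ univ)))
    (hcompl : Tendsto (fun i => ν i sᶜ) l (𝓝 (μ sᶜ))) :
    Tendsto (fun i => ν i s) l (𝓝 (μ s)) := by
  have measure_eq (m : Measure α) (hm : m univ ≠ ∞) : m s = m univ - m sᶜ := by
    rw [← measure_compl hs.compl (ne_top_of_le_ne_top hm (measure_mono (subset_univ _))),
      compl_compl]
  have hν_fin : ∀ᶠ i in l, ν i univ ≠ ∞ := huniv.eventually_ne (measure_ne_top μ univ)
  rw [measure_eq μ (measure_ne_top μ univ)]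
  exact (ENNReal.Tendsto.sub huniv hcompl (Or.inr (measure_ne_top μ _))).congr'
    (hν_fin.mono fun i hi => (measure_eq (ν i) hi).symm)

variable [TopologicalSpace α]

theorem tendsto_measure_isClosed_of_isOpen [IsFiniteMeasure μ] [OpensMeasurableSpace α]
    (h : ∀ U : Set α, IsOpen U → Tendsto (fun i => ν i U) l (𝓝 (μ U)))
    {F : Set α} (hF : IsClosed F) : Tendsto (fun i => ν i F) l (𝓝 (μ F)) :=
  tendsto_measure_of_tendsto_measure_compl hF.measurableSet (h univ isOpen_univ)
    (h Fᶜ hF.isOpen_compl)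

theorem tendsto_measure_isOpen_of_isClosed [IsFiniteMeasure μ] [OpensMeasurableSpace α]
    (h : ∀ F : Set α, IsClosed F → Tendsto (fun i => ν i F) l (𝓝 (μ F)))
    {U : Set α} (hU : IsOpen U) : Tendsto (fun i => ν i U) l (𝓝 (μ U)) :=
  tendsto_measure_of_tendsto_measure_compl hU.measurableSet (h univ isClosed_univ)
    (h Uᶜ hU.isClosed_compl)

theorem tendsto_measure_of_isOpen_of_isClosed [μ.WeaklyRegular]
    (hopen : ∀ U : Set α, IsOpen U → Tendsto (fun i => ν i U) l (𝓝 (μ U)))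
    (hclosed : ∀ F : Set α, IsClosed F → Tendsto (fun i => ν i F) l (𝓝 (μ F)))
    {s : Set α} (hs : MeasurableSet s) (hμs : μ s ≠ ∞) :
    Tendsto (fun i => ν i s) l (𝓝 (μ s)) := by
  refine tendsto_order.2 ⟨fun a ha => ?_, fun b hb => ?_⟩
  · obtain ⟨F, hFs, hF, haF⟩ := hs.exists_lt_isClosed_of_ne_top hμs ha
    filter_upwards [(tendsto_order.1 (hclosed F hF)).1 a haF] with i hi
    exact hi.trans_le (measure_mono hFs)
  · obtain ⟨U, hsU, hU, hUb⟩ := s.exists_isOpen_lt_of_lt b hb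
    filter_upwards [(tendsto_order.1 (hopen U hU)).2 b hUb] with i hi
    exact (measure_mono hsU).trans_lt hi

end

theorem stmt5_general {X : Type*} [MetricSpace X] [MeasurableSpace X] [BorelSpace X]
    (ν : ℕ → Measure X) (μ : Measure X)
    (hμ : IsFiniteMeasure μ) :
    List.TFAE
      [∀ A : Set X, MeasurableSet A → Tendsto (fun n => ν n A) atTop (𝓝 (μ A)),
       ∀ B : Set X, IsOpen B → Tendsto (fun n => ν n B) atTop (𝓝 (μ B)),
       ∀ A : Set X, IsClosed A → Tendsto (fun n => ν n A) atTop (𝓝 (μ A))] := by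
  tfae_have 1 → 2 := fun h B hB => h B hB.measurableSet
  tfae_have 2 → 3 := fun h A hA => tendsto_measure_isClosed_of_isOpen h hA
  tfae_have 3 → 2 := fun h B hB => tendsto_measure_isOpen_of_isClosed h hB
  tfae_have 2 → 1 := fun h A hA =>
    tendsto_measure_of_isOpen_of_isClosed h (fun F hF => tendsto_measure_isClosed_of_isOpen h hF)
      hA (measure_ne_top μ A)
  tfae_finish

/-- Feinberg-Kasyanov-Zgurovsky: on a metric space, setwise convergence is equivalent to
convergence on all open sets, and to convergence on all closed sets. -/
theorem stmt5 {X : Type*} [MetricSpace X] [MeasurableSpace X] [BorelSpace X]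
    (ν : ℕ → Measure X) (μ : Measure X)
    (hν : ∀ n, IsFiniteMeasure (ν n)) (hμ : IsFiniteMeasure μ) :
    List.TFAE
      [∀ A : Set X, MeasurableSet A → Tendsto (fun n => ν n A) atTop (𝓝 (μ A)),
       ∀ B : Set X, IsOpen B → Tendsto (fun n => ν n B) atTop (𝓝 (μ B)),
       ∀ A : Set X, IsClosed A → Tendsto (fun n => ν n A) atTop (𝓝 (μ A))] :=
  stmt5_general ν μ hμ
end

section
/- Let X be a Heine-Borel metric space (i.e., every closed bounded subset of X is compact), let (ν_n) be a sequence of finite Borel measures on X and ν a finite Borel measure on X. If ∫_X f dν_n → ∫_X f dν for every continuous function f : X → ℝ with compact support, then limsup_{n→∞} ν_n(A) ≤ ν(A) for every bounded closed set A ⊆ X, and liminf_{n→∞} ν_n(B) ≥ ν(B) for every bounded open set B ⊆ X. -/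
open MeasureTheory Filter Topology

/-- Key estimate: for `0 ≤ f ≤ 1`, `ENNReal.ofReal (∫ f ∂ρ)` is squeezed between measures. -/
lemma stmt9_lintegral_eq {X : Type*} [MetricSpace X] [MeasurableSpace X] [BorelSpace X]
    (ρ : Measure X) [IsFiniteMeasure ρ] {f : X → ℝ} (hf : Continuous f)
    (hcs : HasCompactSupport f) (h0 : ∀ x, 0 ≤ f x) :
    ENNReal.ofReal (∫ x, f x ∂ρ) = ∫⁻ x, ENNReal.ofReal (f x) ∂ρ :=
  MeasureTheory.ofReal_integral_eq_lintegral_ofReal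
    (hf.integrable_of_hasCompactSupport hcs) (Filter.Eventually.of_forall h0)

lemma stmt9_lower {X : Type*} [MetricSpace X] [MeasurableSpace X] [BorelSpace X]
    (ρ : Measure X) [IsFiniteMeasure ρ] {f : X → ℝ} (hf : Continuous f)
    (hcs : HasCompactSupport f) (h01 : ∀ x, f x ∈ Set.Icc (0:ℝ) 1)
    {S : Set X} (hS : MeasurableSet S) (hfS : Set.EqOn f 1 S) :
    ρ S ≤ ENNReal.ofReal (∫ x, f x ∂ρ) := by
  rw [stmt9_lintegral_eq ρ hf hcs (fun x => (h01 x).1)]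
  rw [← MeasureTheory.lintegral_indicator_one hS]
  refine MeasureTheory.lintegral_mono fun x => ?_
  by_cases hx : x ∈ S
  · simp [Set.indicator_of_mem hx, hfS hx]
  · simp [Set.indicator_of_notMem hx]

lemma stmt9_upper {X : Type*} [MetricSpace X] [MeasurableSpace X] [BorelSpace X]
    (ρ : Measure X) [IsFiniteMeasure ρ] {f : X → ℝ} (hf : Continuous f)
    (hcs : HasCompactSupport f) (h01 : ∀ x, f x ∈ Set.Icc (0:ℝ) 1)
    {U : Set X} (hU : MeasurableSet U) (hfU : ∀ x ∉ U, f x = 0) :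
    ENNReal.ofReal (∫ x, f x ∂ρ) ≤ ρ U := by
  rw [stmt9_lintegral_eq ρ hf hcs (fun x => (h01 x).1)]
  rw [← MeasureTheory.lintegral_indicator_one hU]
  refine MeasureTheory.lintegral_mono fun x => ?_
  by_cases hx : x ∈ U
  · simp only [Set.indicator_of_mem hx, Pi.one_apply]
    exact ENNReal.ofReal_le_one.2 (h01 x).2
  · simp [Set.indicator_of_notMem hx, hfU x hx]

/-- On a Heine-Borel metric space, vague convergence of a sequence of finite Borel measures
implies the upper bound on bounded closed sets and the lower bound on bounded open sets. -/
theorem stmt9 {X : Type*} [MetricSpace X] [MeasurableSpace X] [BorelSpace X]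
    (hHB : ∀ s : Set X, IsClosed s → Bornology.IsBounded s → IsCompact s)
    (ν : ℕ → Measure X) (μ : Measure X)
    (hν : ∀ n, IsFiniteMeasure (ν n)) (hμ : IsFiniteMeasure μ)
    (h : ∀ f : X → ℝ, Continuous f → HasCompactSupport f →
        Tendsto (fun n => ∫ x, f x ∂(ν n)) atTop (𝓝 (∫ x, f x ∂μ))) :
    (∀ A : Set X, IsClosed A → Bornology.IsBounded A →
        limsup (fun n => ν n A) atTop ≤ μ A) ∧
    (∀ B : Set X, IsOpen B → Bornology.IsBounded B →
        μ B ≤ liminf (fun n => ν n B) atTop) := by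
  haveI : ProperSpace X :=
    ⟨fun x r => hHB _ Metric.isClosed_closedBall Metric.isBounded_closedBall⟩
  constructor
  · intro A hA hAb
    have hAc : IsCompact A := hHB A hA hAb
    rw [A.measure_eq_iInf_isOpen]
    simp only [le_iInf_iff]
    intro U hAU hUopen
    obtain ⟨f, hf1, hf0, hfc, hf01⟩ :=
      exists_continuous_one_zero_of_isCompact hAc hUopen.isClosed_compl
        (Set.disjoint_compl_right_iff_subset.mpr hAU)
    have key : ∀ n, ν n A ≤ ENNReal.ofReal (∫ x, f x ∂(ν n)) := fun n => by
      haveI := hν n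
      exact stmt9_lower (ν n) f.continuous hfc hf01 hA.measurableSet hf1
    calc limsup (fun n => ν n A) atTop
        ≤ limsup (fun n => ENNReal.ofReal (∫ x, f x ∂(ν n))) atTop :=
          Filter.limsup_le_limsup (Filter.Eventually.of_forall key)
      _ = ENNReal.ofReal (∫ x, f x ∂μ) := by
          refine Filter.Tendsto.limsup_eq ?_
          exact (ENNReal.continuous_ofReal.tendsto _).comp (h f f.continuous hfc)
      _ ≤ μ U := stmt9_upper μ f.continuous hfc hf01 hUopen.measurableSet
          (fun x hx => hf0 hx)
  · intro B hB hBb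
    rw [hB.measure_eq_iSup_isClosed]
    simp only [iSup_le_iff]
    intro F hFB hF
    have hFc : IsCompact F := hHB F hF (hBb.subset hFB)
    obtain ⟨f, hf1, hf0, hfc, hf01⟩ :=
      exists_continuous_one_zero_of_isCompact hFc hB.isClosed_compl
        (Set.disjoint_compl_right_iff_subset.mpr hFB)
    have key : ∀ n, ENNReal.ofReal (∫ x, f x ∂(ν n)) ≤ ν n B := fun n => by
      haveI := hν n
      exact stmt9_upper (ν n) f.continuous hfc hf01 hB.measurableSet (fun x hx => hf0 hx)
    calc μ F ≤ ENNReal.ofReal (∫ x, f x ∂μ) :=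
          stmt9_lower μ f.continuous hfc hf01 hF.measurableSet hf1
      _ = liminf (fun n => ENNReal.ofReal (∫ x, f x ∂(ν n))) atTop := by
          refine (Filter.Tendsto.liminf_eq ?_).symm
          exact (ENNReal.continuous_ofReal.tendsto _).comp (h f f.continuous hfc)
      _ ≤ liminf (fun n => ν n B) atTop :=
          Filter.liminf_le_liminf (Filter.Eventually.of_forall key)
end

section
/- Let X be a metric space and let μ, ν be finite Borel measures on X. Then sup over all Borel sets A ⊆ X of |μ(A) − ν(A)| equals the sup over all closed bounded sets A ⊆ X of |μ(A) − ν(A)|, and also equals the sup over all open bounded sets B ⊆ X of |μ(B) − ν(B)|. -/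
/-!
The map `s ↦ |μ s - ν s|` is 1-Lipschitz for the pseudometric `(μ + ν) (s ∆ t)`. For the finite
measure `μ + ν` on a metric space, a Borel set is approximated from inside by closed sets (weak
regularity), and a closed set by its intersections with large closed balls; a bounded set is
approximated from outside by open sets, which may be cut down to a thickening of it. Hence every
value of `|μ - ν|` on a Borel set is approached by values on closed bounded sets, and each of these
by values on open bounded sets.
-/

open MeasureTheory Bornology Metric Set ENNReal

theorem ciSup_subtype_le_of_forall_exists_le_add {α : Type*} {P Q : α → Prop} {f : α → ℝ}
    [Nonempty {a // P a}] (hf : BddAbove (range f))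
    (h : ∀ a, P a → ∀ ε > 0, ∃ b, Q b ∧ f a ≤ f b + ε) :
    ⨆ a : {a // P a}, f a ≤ ⨆ b : {b // Q b}, f b :=
  ciSup_le fun a ↦ le_of_forall_pos_le_add fun ε hε ↦ by
    obtain ⟨b, hb, hab⟩ := h a a.2 ε hε
    exact hab.trans <| add_le_add_left
      (le_ciSup (f := fun b : {b // Q b} ↦ f b) (hf.mono (range_comp_subset_range _ f))
        ⟨b, hb⟩) ε

theorem ciSup_subtype_le_of_imp {α : Type*} {P Q : α → Prop} {f : α → ℝ}
    [Nonempty {a // P a}] (hf : BddAbove (range f)) (hPQ : ∀ a, P a → Q a) :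
    ⨆ a : {a // P a}, f a ≤ ⨆ b : {b // Q b}, f b :=
  ciSup_subtype_le_of_forall_exists_le_add hf fun a ha _ hε ↦
    ⟨a, hPQ a ha, le_add_of_nonneg_right hε.le⟩

namespace MeasureTheory.Measure

variable {X : Type*} [PseudoMetricSpace X] [MeasurableSpace X]

theorem InnerRegularWRT.isClosed_isBounded_isClosed (ρ : Measure X) :
    ρ.InnerRegularWRT (fun s ↦ IsClosed s ∧ IsBounded s) IsClosed := by
  intro F hF r hr
  rcases F.eq_empty_or_nonempty with rfl | ⟨x, -⟩
  · simp at hr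
  have hlim : ρ F = ⨆ n : ℕ, ρ (F ∩ closedBall x n) := by
    conv_lhs => rw [← iUnion_inter_closedBall_nat F x]
    exact Monotone.measure_iUnion fun m n hmn ↦
      inter_subset_inter_right F (closedBall_subset_closedBall (by exact_mod_cast hmn))
  obtain ⟨n, hn⟩ := lt_iSup_iff.mp (hlim ▸ hr)
  exact ⟨F ∩ closedBall x n, inter_subset_left,
    ⟨hF.inter isClosed_closedBall, isBounded_closedBall.subset inter_subset_right⟩, hn⟩

theorem _root_.MeasurableSet.exists_isClosed_isBounded_measureReal_sdiff_lt
    [BorelSpace X] {ρ : Measure X} [IsFiniteMeasure ρ] {s : Set X} (hs : MeasurableSet s)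
    {ε : ℝ} (hε : 0 < ε) :
    ∃ K ⊆ s, IsClosed K ∧ IsBounded K ∧ ρ.real (s \ K) < ε := by
  have hreg := (InnerRegularWRT.isClosed_isBounded_isClosed ρ).trans
    WeaklyRegular.innerRegular_measurable
  obtain ⟨K, hKs, ⟨hKc, hKb⟩, hlt⟩ := hreg.exists_subset_lt_add ⟨isClosed_empty, isBounded_empty⟩
    ⟨hs, measure_ne_top ρ s⟩ (measure_ne_top ρ s) (ofReal_pos.mpr hε).ne'
  exact ⟨K, hKs, hKc, hKb, toReal_lt_of_lt_ofReal <|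
    measure_sdiff_lt_of_lt_add hKc.nullMeasurableSet hKs (measure_ne_top ρ K) hlt⟩

theorem _root_.Bornology.IsBounded.exists_isOpen_isBounded_measureReal_sdiff_lt
    {ρ : Measure X} [IsFiniteMeasure ρ] [OuterRegular ρ] {A : Set X} (hA : IsBounded A)
    (hAm : MeasurableSet A) {ε : ℝ} (hε : 0 < ε) :
    ∃ U ⊇ A, IsOpen U ∧ IsBounded U ∧ ρ.real (U \ A) < ε := by
  obtain ⟨U, hAU, hUo, hlt⟩ :=
    A.exists_isOpen_lt_add (measure_ne_top ρ A) (ofReal_pos.mpr hε).ne'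
  refine ⟨U ∩ thickening 1 A, subset_inter hAU (self_subset_thickening one_pos A),
    hUo.inter isOpen_thickening, hA.thickening.subset inter_subset_right,
    toReal_lt_of_lt_ofReal ?_⟩
  calc ρ ((U ∩ thickening 1 A) \ A) ≤ ρ (U \ A) := by gcongr; exact inter_subset_left
    _ < ENNReal.ofReal ε :=
      measure_sdiff_lt_of_lt_add hAm.nullMeasurableSet hAU (measure_ne_top ρ A) hlt

end MeasureTheory.Measure

section

variable {X : Type*} [MeasurableSpace X] {μ ν : Measure X} [IsFiniteMeasure μ] [IsFiniteMeasure ν]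

theorem abs_measureReal_sub_measureReal_le (s : Set X) :
    |μ.real s - ν.real s| ≤ μ.real univ + ν.real univ :=
  (abs_sub _ _).trans <| by
    rw [abs_of_nonneg measureReal_nonneg, abs_of_nonneg measureReal_nonneg]
    exact add_le_add (measureReal_mono (subset_univ s)) (measureReal_mono (subset_univ s))

theorem abs_sub_abs_measureReal_sub_le {s t : Set X} (ht : MeasurableSet t) (hts : t ⊆ s) :
    |(|μ.real s - ν.real s| - |μ.real t - ν.real t|)| ≤ (μ + ν).real (s \ t) := by
  have hdiff :
      (μ.real s - ν.real s) - (μ.real t - ν.real t) = μ.real (s \ t) - ν.real (s \ t) := by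
    rw [measureReal_sdiff hts ht, measureReal_sdiff hts ht]; ring
  calc |(|μ.real s - ν.real s| - |μ.real t - ν.real t|)|
      ≤ |(μ.real s - ν.real s) - (μ.real t - ν.real t)| := abs_abs_sub_abs_le_abs_sub _ _
    _ = |μ.real (s \ t) - ν.real (s \ t)| := by rw [hdiff]
    _ ≤ (μ + ν).real (s \ t) := by
      rw [measureReal_add_apply]
      exact (abs_sub _ _).trans_eq <| by
        rw [abs_of_nonneg measureReal_nonneg, abs_of_nonneg measureReal_nonneg]

end

/-- For two finite Borel measures on a metric space, the supremum of |μ(A) − ν(A)| over Borel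
sets equals the supremum over closed bounded sets and the supremum over open bounded sets. -/
theorem stmt13 {X : Type*} [MetricSpace X] [MeasurableSpace X] [BorelSpace X]
    (μ ν : Measure X) (hμ : IsFiniteMeasure μ) (hν : IsFiniteMeasure ν) :
    (⨆ A : {s : Set X // MeasurableSet s}, |(μ (A : Set X)).toReal - (ν (A : Set X)).toReal|) =
      (⨆ A : {s : Set X // IsClosed s ∧ Bornology.IsBounded s},
        |(μ (A : Set X)).toReal - (ν (A : Set X)).toReal|) ∧
    (⨆ A : {s : Set X // MeasurableSet s}, |(μ (A : Set X)).toReal - (ν (A : Set X)).toReal|) =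
      (⨆ B : {s : Set X // IsOpen s ∧ Bornology.IsBounded s},
        |(μ (B : Set X)).toReal - (ν (B : Set X)).toReal|) := by
  let f : Set X → ℝ := fun s ↦ |μ.real s - ν.real s|
  show (⨆ A : {s : Set X // MeasurableSet s}, f A) =
      (⨆ A : {s : Set X // IsClosed s ∧ IsBounded s}, f A) ∧
    (⨆ A : {s : Set X // MeasurableSet s}, f A) =
      ⨆ A : {s : Set X // IsOpen s ∧ IsBounded s}, f A
  have hf : BddAbove (range f) := ⟨_, forall_mem_range.2 abs_measureReal_sub_measureReal_le⟩
  have : Nonempty {s : Set X // MeasurableSet s} := ⟨⟨∅, .empty⟩⟩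
  have : Nonempty {s : Set X // IsClosed s ∧ IsBounded s} := ⟨⟨∅, isClosed_empty, isBounded_empty⟩⟩
  have : Nonempty {s : Set X // IsOpen s ∧ IsBounded s} := ⟨⟨∅, isOpen_empty, isBounded_empty⟩⟩
  have closed_le_borel := ciSup_subtype_le_of_imp (Q := MeasurableSet) hf
    fun s (hs : IsClosed s ∧ IsBounded s) ↦ hs.1.measurableSet
  have open_le_borel := ciSup_subtype_le_of_imp (Q := MeasurableSet) hf
    fun s (hs : IsOpen s ∧ IsBounded s) ↦ hs.1.measurableSet
  have borel_le_closed := ciSup_subtype_le_of_forall_exists_le_add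
    (Q := fun s ↦ IsClosed s ∧ IsBounded s) hf fun s (hs : MeasurableSet s) ε hε ↦ by
      obtain ⟨K, hKs, hKc, hKb, hK⟩ :=
        hs.exists_isClosed_isBounded_measureReal_sdiff_lt (ρ := μ + ν) hε
      have := abs_le.1 (abs_sub_abs_measureReal_sub_le (μ := μ) (ν := ν) hKc.measurableSet hKs)
      exact ⟨K, ⟨hKc, hKb⟩, by linarith⟩
  have closed_le_open := ciSup_subtype_le_of_forall_exists_le_add
    (Q := fun s ↦ IsOpen s ∧ IsBounded s) hf fun K (hK : IsClosed K ∧ IsBounded K) ε hε ↦ by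
      obtain ⟨U, hKU, hUo, hUb, hU⟩ :=
        hK.2.exists_isOpen_isBounded_measureReal_sdiff_lt (ρ := μ + ν) hK.1.measurableSet hε
      have := abs_le.1 (abs_sub_abs_measureReal_sub_le (μ := μ) (ν := ν) hK.1.measurableSet hKU)
      exact ⟨U, ⟨hUo, hUb⟩, by linarith⟩
  exact ⟨le_antisymm borel_le_closed closed_le_borel,
    le_antisymm (borel_le_closed.trans closed_le_open) open_le_borel⟩
end

section
/- Let X be a metric space, let μ, ν be finite Borel measures on X, and let γ ≥ 0 be a real number. Then sup over all Borel-measurable functions f : X → [−γ, γ] of |∫_X f dμ − ∫_X f dν| equals the sup over all continuous functions f : X → [−γ, γ] with bounded support of |∫_X f dμ − ∫_X f dν|. -/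
/-!
Bounded continuous functions are dense in `L¹(μ + ν)`; clamping such an approximation to `[-γ, γ]`
and multiplying it by an Urysohn cutoff that equals `1` on a large ball keeps it close to a given
measurable `f : X → [-γ, γ]`, because a finite measure leaves little mass outside large balls.
Since `∫ · ∂μ - ∫ · ∂ν` is `1`-Lipschitz for the `L¹(μ + ν)` distance, both suprema agree.
-/

open MeasureTheory Filter Topology Metric Set

lemma ciSup_subtype_eq_of_forall_le_add {α : Type*} {P Q : α → Prop} {F : α → ℝ} {C : ℝ}
    (hQP : ∀ b, Q b → P b) (hQ : ∃ b, Q b) (hC : ∀ a, P a → F a ≤ C)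
    (happrox : ∀ a, P a → ∀ ε > 0, ∃ b, Q b ∧ F a ≤ F b + ε) :
    ⨆ a : {a // P a}, F a = ⨆ b : {b // Q b}, F b := by
  obtain ⟨b₀, hb₀⟩ := hQ
  have : Nonempty {a // P a} := ⟨⟨b₀, hQP b₀ hb₀⟩⟩
  have : Nonempty {b // Q b} := ⟨⟨b₀, hb₀⟩⟩
  have hbddP : BddAbove (range fun a : {a // P a} => F a) :=
    ⟨C, forall_mem_range.mpr fun a => hC a a.2⟩
  have hbddQ : BddAbove (range fun b : {b // Q b} => F b) :=
    ⟨C, forall_mem_range.mpr fun b => hC b (hQP b b.2)⟩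
  refine le_antisymm (ciSup_le fun a => le_of_forall_pos_le_add fun ε hε => ?_)
    (ciSup_le fun b => le_ciSup hbddP ⟨b, hQP b b.2⟩)
  obtain ⟨b, hb, hab⟩ := happrox a a.2 ε hε
  exact hab.trans (add_le_add_left (le_ciSup hbddQ ⟨b, hb⟩) ε)

section Discrepancy

variable {X : Type*} [MeasurableSpace X] {μ ν : Measure X}

lemma abs_integral_sub_integral_le [IsFiniteMeasure μ] [IsFiniteMeasure ν] {f : X → ℝ} {γ : ℝ}
    (hf : ∀ x, f x ∈ Icc (-γ) γ) :
    |∫ x, f x ∂μ - ∫ x, f x ∂ν| ≤ γ * μ.real univ + γ * ν.real univ := by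
  have hfγ : ∀ x, ‖f x‖ ≤ γ := fun x => abs_le.mpr (hf x)
  calc |∫ x, f x ∂μ - ∫ x, f x ∂ν| ≤ ‖∫ x, f x ∂μ‖ + ‖∫ x, f x ∂ν‖ := abs_sub _ _
    _ ≤ γ * μ.real univ + γ * ν.real univ :=
      add_le_add (norm_integral_le_of_norm_le_const (ae_of_all _ hfγ))
        (norm_integral_le_of_norm_le_const (ae_of_all _ hfγ))

lemma abs_integral_sub_integral_sub_sub_le {f g : X → ℝ} (hf : Integrable f (μ + ν))
    (hg : Integrable g (μ + ν)) :
    |(∫ x, f x ∂μ - ∫ x, f x ∂ν) - (∫ x, g x ∂μ - ∫ x, g x ∂ν)| ≤ ∫ x, |f x - g x| ∂(μ + ν) := by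
  obtain ⟨hfμ, hfν⟩ := integrable_add_measure.mp hf
  obtain ⟨hgμ, hgν⟩ := integrable_add_measure.mp hg
  calc |(∫ x, f x ∂μ - ∫ x, f x ∂ν) - (∫ x, g x ∂μ - ∫ x, g x ∂ν)|
      = |∫ x, f x - g x ∂μ - ∫ x, f x - g x ∂ν| := by
        rw [integral_sub hfμ hgμ, integral_sub hfν hgν]; ring_nf
    _ ≤ |∫ x, f x - g x ∂μ| + |∫ x, f x - g x ∂ν| := abs_sub _ _
    _ ≤ ∫ x, |f x - g x| ∂μ + ∫ x, |f x - g x| ∂ν :=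
        add_le_add abs_integral_le_integral_abs abs_integral_le_integral_abs
    _ = ∫ x, |f x - g x| ∂(μ + ν) :=
        (integral_add_measure (hfμ.sub hgμ).abs (hfν.sub hgν).abs).symm

end Discrepancy

section Approximation

variable {X : Type*} [PseudoMetricSpace X] [MeasurableSpace X] (τ : Measure X) [IsFiniteMeasure τ]

lemma tendsto_measureReal_compl_closedBall [OpensMeasurableSpace X] (x₀ : X) :
    Tendsto (fun r : ℝ => τ.real (closedBall x₀ r)ᶜ) atTop (𝓝 0) := by
  have hempty : ⋂ r : ℝ, (closedBall x₀ r)ᶜ = ∅ :=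
    eq_empty_of_forall_notMem fun x hx =>
      mem_iInter.mp hx (dist x x₀) (mem_closedBall.mpr le_rfl)
  have h := tendsto_measure_iInter_atTop (μ := τ) (s := fun r : ℝ => (closedBall x₀ r)ᶜ)
    (fun r => isClosed_closedBall.measurableSet.compl.nullMeasurableSet)
    (fun r s hrs => compl_subset_compl.mpr (closedBall_subset_closedBall hrs))
    ⟨0, measure_ne_top τ _⟩
  rw [hempty, measure_empty] at h
  exact (ENNReal.tendsto_toReal ENNReal.zero_ne_top).comp h

lemma exists_continuous_mem_Icc_integral_abs_sub_le [BorelSpace X] {f : X → ℝ}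
    (hf : Measurable f) {a b : ℝ} (hab : a ≤ b) (hfab : ∀ x, f x ∈ Icc a b) {ε : ℝ} (hε : 0 < ε) :
    ∃ g : X → ℝ, Continuous g ∧ (∀ x, g x ∈ Icc a b) ∧ ∫ x, |f x - g x| ∂τ ≤ ε := by
  have hfi : Integrable f τ := .of_mem_Icc a b hf.aemeasurable (ae_of_all _ hfab)
  obtain ⟨g₀, hg₀ε, hg₀i⟩ := hfi.exists_boundedContinuous_integral_sub_le hε
  refine ⟨fun x => projIcc a b hab (g₀ x), continuous_subtype_val.comp
    (continuous_projIcc.comp g₀.continuous), fun x => Subtype.prop _, ?_⟩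
  refine le_trans (integral_mono_of_nonneg (ae_of_all _ fun x => abs_nonneg _)
    (hfi.sub hg₀i).norm (ae_of_all _ fun x => ?_)) hg₀ε
  calc |f x - projIcc a b hab (g₀ x)|
      = |(projIcc a b hab (f x) : ℝ) - projIcc a b hab (g₀ x)| := by
        rw [projIcc_of_mem hab (hfab x)]
    _ ≤ |f x - g₀ x| := abs_projIcc_sub_projIcc hab

lemma exists_continuous_isBounded_tsupport_integral_abs_sub_lt [OpensMeasurableSpace X]
    {g : X → ℝ} (hg : Continuous g) {γ : ℝ} (hgγ : ∀ x, |g x| ≤ γ) {ε : ℝ} (hε : 0 < ε) :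
    ∃ h : X → ℝ, Continuous h ∧ Bornology.IsBounded (tsupport h) ∧ (∀ x, |h x| ≤ |g x|) ∧
      ∫ x, |g x - h x| ∂τ < ε := by
  rcases isEmpty_or_nonempty X with hX | ⟨⟨x₀⟩⟩
  · exact ⟨g, hg, by simp [eq_empty_of_isEmpty], fun x => le_rfl, by simpa using hε⟩
  obtain ⟨r, hr⟩ := (((tendsto_measureReal_compl_closedBall τ x₀).const_mul γ).eventually
    (gt_mem_nhds (by simpa using hε))).exists
  obtain ⟨χ, hχ0, hχ1, hχ01⟩ := exists_continuous_zero_one_of_isClosed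
    isOpen_ball.isClosed_compl (isClosed_closedBall (x := x₀) (ε := r))
    (disjoint_compl_left.mono_right (closedBall_subset_ball (lt_add_one r)))
  have hχball : Function.support χ ⊆ ball x₀ (r + 1) := fun x hx =>
    not_not.mp fun hx' => hx (hχ0 hx')
  have herr : ∀ x, |g x - χ x * g x| ≤ (closedBall x₀ r)ᶜ.indicator (fun _ => γ) x := by
    intro x
    by_cases hx : x ∈ closedBall x₀ r
    · simp [hχ1 hx, hx]
    · rw [indicator_of_mem hx, ← one_sub_mul, abs_mul,
        abs_of_nonneg (sub_nonneg.mpr (hχ01 x).2)]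
      exact (mul_le_of_le_one_left (abs_nonneg _) (by linarith [(hχ01 x).1])).trans (hgγ x)
  refine ⟨fun x => χ x * g x, χ.continuous.mul hg,
    (isBounded_ball.subset hχball).closure.subset tsupport_mul_subset_left, fun x => ?_, ?_⟩
  · rw [abs_mul, abs_of_nonneg (hχ01 x).1]
    exact mul_le_of_le_one_left (abs_nonneg _) (hχ01 x).2
  calc ∫ x, |g x - χ x * g x| ∂τ ≤ ∫ x, (closedBall x₀ r)ᶜ.indicator (fun _ => γ) x ∂τ :=
        integral_mono_of_nonneg (ae_of_all _ fun x => abs_nonneg _)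
          ((integrable_const γ).indicator isClosed_closedBall.measurableSet.compl)
          (ae_of_all _ herr)
    _ = γ * τ.real (closedBall x₀ r)ᶜ := by
        rw [integral_indicator_const _ isClosed_closedBall.measurableSet.compl, smul_eq_mul,
          mul_comm]
    _ < ε := hr

lemma exists_continuous_isBounded_tsupport_mem_Icc_integral_abs_sub_lt [BorelSpace X]
    {f : X → ℝ} (hf : Measurable f) {γ : ℝ} (hγ : 0 ≤ γ) (hfγ : ∀ x, f x ∈ Icc (-γ) γ)
    {ε : ℝ} (hε : 0 < ε) :
    ∃ h : X → ℝ, Continuous h ∧ Bornology.IsBounded (tsupport h) ∧ (∀ x, h x ∈ Icc (-γ) γ) ∧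
      ∫ x, |f x - h x| ∂τ < ε := by
  obtain ⟨g, hg, hgγ, hfg⟩ :=
    exists_continuous_mem_Icc_integral_abs_sub_le τ hf (neg_le_self hγ) hfγ (half_pos hε)
  obtain ⟨h, hh, hhb, hhg, hgh⟩ := exists_continuous_isBounded_tsupport_integral_abs_sub_lt τ hg
    (fun x => abs_le.mpr (hgγ x)) (half_pos hε)
  have hhγ : ∀ x, h x ∈ Icc (-γ) γ := fun x => abs_le.mp ((hhg x).trans (abs_le.mpr (hgγ x)))
  have hint : ∀ u : X → ℝ, Measurable u → (∀ x, u x ∈ Icc (-γ) γ) → Integrable u τ :=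
    fun u hu huγ => .of_mem_Icc _ _ hu.aemeasurable (ae_of_all _ huγ)
  have hfgi := ((hint f hf hfγ).sub (hint g hg.measurable hgγ)).abs
  have hghi := ((hint g hg.measurable hgγ).sub (hint h hh.measurable hhγ)).abs
  refine ⟨h, hh, hhb, hhγ, ?_⟩
  calc ∫ x, |f x - h x| ∂τ ≤ ∫ x, (|f x - g x| + |g x - h x|) ∂τ :=
        integral_mono_of_nonneg (ae_of_all _ fun x => abs_nonneg _) (hfgi.add hghi)
          (ae_of_all _ fun x => abs_sub_le _ _ _)
    _ = ∫ x, |f x - g x| ∂τ + ∫ x, |g x - h x| ∂τ := integral_add hfgi hghi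
    _ < ε := by linarith

end Approximation

/-- For two finite Borel measures on a metric space and γ ≥ 0, the supremum of
|∫ f dμ − ∫ f dν| over measurable functions with values in [−γ, γ] equals the supremum over
continuous functions with bounded support and values in [−γ, γ]. -/
theorem stmt16 {X : Type*} [MetricSpace X] [MeasurableSpace X] [BorelSpace X]
    (μ ν : Measure X) (hμ : IsFiniteMeasure μ) (hν : IsFiniteMeasure ν)
    (γ : ℝ) (hγ : 0 ≤ γ) :
    (⨆ f : {f : X → ℝ // Measurable f ∧ ∀ x, f x ∈ Set.Icc (-γ) γ},
        |∫ x, f.1 x ∂μ - ∫ x, f.1 x ∂ν|) =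
      ⨆ f : {f : X → ℝ // Continuous f ∧ Bornology.IsBounded (tsupport f) ∧
          ∀ x, f x ∈ Set.Icc (-γ) γ},
        |∫ x, f.1 x ∂μ - ∫ x, f.1 x ∂ν| := by
  have hint : ∀ f : X → ℝ, Measurable f → (∀ x, f x ∈ Icc (-γ) γ) → Integrable f (μ + ν) :=
    fun f hf hfγ => .of_mem_Icc _ _ hf.aemeasurable (ae_of_all _ hfγ)
  refine ciSup_subtype_eq_of_forall_le_add (F := fun f : X → ℝ => |∫ x, f x ∂μ - ∫ x, f x ∂ν|)
    (fun g hg => ⟨hg.1.measurable, hg.2.2⟩)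
    ⟨0, continuous_const, by simp, fun _ => ⟨neg_nonpos.mpr hγ, hγ⟩⟩
    (fun f hf => abs_integral_sub_integral_le hf.2) fun f hf ε hε => ?_
  obtain ⟨g, hg, hgb, hgγ, hfg⟩ :=
    exists_continuous_isBounded_tsupport_mem_Icc_integral_abs_sub_lt (μ + ν) hf.1 hγ hf.2 hε
  have hclose := abs_integral_sub_integral_sub_sub_le (hint f hf.1 hf.2) (hint g hg.measurable hgγ)
  exact ⟨g, ⟨hg, hgb, hgγ⟩,
    sub_le_iff_le_add'.mp (((abs_sub_abs_le_abs_sub _ _).trans hclose).trans hfg.le)⟩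
end

section
/- Let X be a metric space, let (ν_n) be a sequence of finite Borel measures on X and ν a finite Borel measure on X. Then the following are equivalent: (I) ν_n converges to ν in total variation, i.e., sup over all Borel-measurable f : X → [−1,1] of |∫_X f dν_n − ∫_X f dν| tends to 0 as n → ∞; (II) sup over all closed bounded sets A ⊆ X of |ν_n(A) − ν(A)| tends to 0; (III) sup over all open bounded sets B ⊆ X of |ν_n(B) − ν(B)| tends to 0. -/
open MeasureTheory Filter Topology
open scoped ENNReal symmDiff

/-!
For finite measures `α` and `β` the three suprema agree up to a factor `2`. Testing against
indicators bounds the set suprema by the functional one. Conversely, a Hahn decomposition `E` for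
`α - β` splits `∫ f ∂α - ∫ f ∂β` into its parts on `E` and `Eᶜ`, each at most the supremum of
`|α A - β A|` over measurable `A`. Since `A ↦ α A - β A` is `1`-Lipschitz for the pseudometric
`(α + β) (A ∆ S)`, and finite measures on a metric space are regular and almost carried by a large
ball, every measurable set is approximated in this pseudometric by closed bounded and by open
bounded sets, so the supremum over measurable sets is also the supremum over either class.
-/

lemma tendsto_zero_iff_of_le_of_le_mul {ι : Type*} {l : Filter ι} {a b : ι → ℝ} {c : ℝ}
    (ha : ∀ i, 0 ≤ a i) (hab : ∀ i, a i ≤ b i) (hba : ∀ i, b i ≤ c * a i) :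
    Tendsto a l (𝓝 0) ↔ Tendsto b l (𝓝 0) :=
  ⟨fun h => squeeze_zero (fun i => (ha i).trans (hab i)) hba (by simpa using h.const_mul c),
    fun h => squeeze_zero ha hab h⟩

namespace MeasureTheory

section MeasurableSpace

variable {X : Type*} [MeasurableSpace X]

lemma abs_measureReal_sub_le_add_measureReal_symmDiff (α β : Measure X) [IsFiniteMeasure α]
    [IsFiniteMeasure β] {s t : Set X} (hs : MeasurableSet s) (ht : MeasurableSet t) :
    |α.real s - β.real s| ≤ |α.real t - β.real t| + (α + β).real (s ∆ t) := by
  have hα := abs_measureReal_sub_le_measureReal_symmDiff (μ := α) hs.nullMeasurableSet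
    ht.nullMeasurableSet
  have hβ := abs_measureReal_sub_le_measureReal_symmDiff (μ := β) hs.nullMeasurableSet
    ht.nullMeasurableSet
  rw [measureReal_add_apply]
  calc |α.real s - β.real s|
      = |(α.real t - β.real t) + (α.real s - α.real t) - (β.real s - β.real t)| := by ring_nf
    _ ≤ |α.real t - β.real t| + |α.real s - α.real t| + |β.real s - β.real t| :=
        (abs_sub _ _).trans (by gcongr; exact abs_add_le _ _)
    _ ≤ _ := by linarith

lemma restrict_le_restrict_of_forall_subset {α β : Measure X} {E : Set X} (hE : MeasurableSet E)
    (h : ∀ t, MeasurableSet t → t ⊆ E → β t ≤ α t) : β.restrict E ≤ α.restrict E :=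
  Measure.le_iff.2 fun s hs => by
    rw [Measure.restrict_apply hs, Measure.restrict_apply hs]
    exact h _ (hs.inter hE) Set.inter_subset_right

lemma abs_integral_sub_le_of_le {α β : Measure X} [IsFiniteMeasure α] (hβα : β ≤ α)
    {f : X → ℝ} (hf : Measurable f) (hb : ∀ x, ‖f x‖ ≤ 1) :
    |∫ x, f x ∂α - ∫ x, f x ∂β| ≤ α.real Set.univ - β.real Set.univ := by
  have : IsFiniteMeasure β := isFiniteMeasure_of_le α hβα
  have : IsFiniteMeasure (α - β) := isFiniteMeasure_of_le α Measure.sub_le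
  calc |∫ x, f x ∂α - ∫ x, f x ∂β|
      = |∫ x, f x ∂(α - β)| := by
        conv_lhs => rw [← Measure.sub_add_cancel_of_le hβα,
          integral_add_measure (.of_bound hf.aestronglyMeasurable 1 (.of_forall hb))
            (.of_bound hf.aestronglyMeasurable 1 (.of_forall hb)), add_sub_cancel_right]
    _ ≤ (α - β).real Set.univ := by
        simpa using norm_integral_le_of_norm_le_const (μ := α - β) (.of_forall hb)
    _ = α.real Set.univ - β.real Set.univ := by
        rw [measureReal_def, Measure.sub_apply .univ hβα,
          ENNReal.toReal_sub_of_le (hβα _) (measure_ne_top _ _)]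
        rfl

lemma abs_setIntegral_sub_le_of_forall_subset (α β : Measure X) [IsFiniteMeasure α]
    {E : Set X} (hE : MeasurableSet E) (hβα : ∀ t, MeasurableSet t → t ⊆ E → β t ≤ α t)
    {f : X → ℝ} (hf : Measurable f) (hb : ∀ x, ‖f x‖ ≤ 1) :
    |∫ x in E, f x ∂α - ∫ x in E, f x ∂β| ≤ |α.real E - β.real E| := by
  have := abs_integral_sub_le_of_le (restrict_le_restrict_of_forall_subset hE hβα) hf hb
  rw [measureReal_restrict_apply_univ, measureReal_restrict_apply_univ] at this
  exact this.trans (le_abs_self _)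

lemma exists_measurableSet_abs_integral_sub_le (α β : Measure X) [IsFiniteMeasure α]
    [IsFiniteMeasure β] {f : X → ℝ} (hf : Measurable f) (hb : ∀ x, ‖f x‖ ≤ 1) :
    ∃ E, MeasurableSet E ∧ |∫ x, f x ∂α - ∫ x, f x ∂β| ≤
      |α.real E - β.real E| + |α.real Eᶜ - β.real Eᶜ| := by
  obtain ⟨E, hE, hβα, hαβ⟩ := hahn_decomposition α β
  have hOnE := abs_setIntegral_sub_le_of_forall_subset α β hE hβα hf hb
  have hOnEc := abs_setIntegral_sub_le_of_forall_subset β α hE.compl hαβ hf hb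
  rw [abs_sub_comm, abs_sub_comm (β.real _)] at hOnEc
  refine ⟨E, hE, ?_⟩
  have hint (γ : Measure X) [IsFiniteMeasure γ] : Integrable f γ :=
    .of_bound hf.aestronglyMeasurable 1 (.of_forall hb)
  rw [← integral_add_compl hE (hint α), ← integral_add_compl hE (hint β), add_sub_add_comm]
  exact (abs_add_le _ _).trans (add_le_add hOnE hOnEc)

noncomputable def measureDiffSup (p : Set X → Prop) (α β : Measure X) : ℝ :=
  ⨆ s : {s : Set X // p s}, |α.real s - β.real s|

noncomputable def integralDiffSup (α β : Measure X) : ℝ :=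
  ⨆ f : {f : X → ℝ // Measurable f ∧ ∀ x, f x ∈ Set.Icc (-1 : ℝ) 1},
    |∫ x, f.1 x ∂α - ∫ x, f.1 x ∂β|

lemma measureDiffSup_nonneg (p : Set X → Prop) (α β : Measure X) : 0 ≤ measureDiffSup p α β :=
  Real.iSup_nonneg fun _ => abs_nonneg _

def ApproximatesMeasurableSets (p : Set X → Prop) : Prop :=
  ∀ (ρ : Measure X) [IsFiniteMeasure ρ] {A : Set X}, MeasurableSet A →
    ∀ ε : ℝ≥0∞, ε ≠ 0 → ∃ S, p S ∧ ρ (A ∆ S) < ε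

section Suprema

variable (α β : Measure X) [IsFiniteMeasure α] [IsFiniteMeasure β]

lemma le_measureDiffSup {p : Set X → Prop} {s : Set X} (hs : p s) :
    |α.real s - β.real s| ≤ measureDiffSup p α β := by
  refine le_ciSup (f := fun s : {s : Set X // p s} => |α.real s - β.real s|) ?_ ⟨s, hs⟩
  refine ⟨α.real Set.univ + β.real Set.univ, ?_⟩
  rintro _ ⟨t, rfl⟩
  exact abs_sub_le_of_nonneg_of_le measureReal_nonneg
    (measureReal_mono (Set.subset_univ _) |>.trans (le_add_of_nonneg_right measureReal_nonneg))
    measureReal_nonneg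
    (measureReal_mono (Set.subset_univ _) |>.trans (le_add_of_nonneg_left measureReal_nonneg))

lemma le_integralDiffSup {f : X → ℝ} (hf : Measurable f) (hb : ∀ x, f x ∈ Set.Icc (-1 : ℝ) 1) :
    |∫ x, f x ∂α - ∫ x, f x ∂β| ≤ integralDiffSup α β := by
  refine le_ciSup (f := fun f : {f : X → ℝ // Measurable f ∧ ∀ x, f x ∈ Set.Icc (-1 : ℝ) 1} =>
    |∫ x, f.1 x ∂α - ∫ x, f.1 x ∂β|) ?_ ⟨f, hf, hb⟩
  refine ⟨α.real Set.univ + β.real Set.univ, ?_⟩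
  rintro _ ⟨g, rfl⟩
  have hg : ∀ γ : Measure X, ∀ᵐ x ∂γ, ‖g.1 x‖ ≤ 1 := fun _ => .of_forall fun x => abs_le.2 (g.2.2 x)
  calc _ ≤ ‖∫ x, g.1 x ∂α‖ + ‖∫ x, g.1 x ∂β‖ := abs_sub _ _
    _ ≤ _ := by
      simpa using add_le_add (norm_integral_le_of_norm_le_const (hg α))
        (norm_integral_le_of_norm_le_const (hg β))

lemma measureDiffSup_le_integralDiffSup {p : Set X → Prop} (hp : ∀ s, p s → MeasurableSet s) :
    measureDiffSup p α β ≤ integralDiffSup α β := by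
  refine Real.iSup_le (fun s => ?_) (Real.iSup_nonneg fun _ => abs_nonneg _)
  have hs := hp s s.2
  have := le_integralDiffSup α β (measurable_one.indicator hs) fun x => by
    by_cases h : x ∈ (s : Set X) <;> simp [h]
  simpa [integral_indicator_one hs] using this

lemma integralDiffSup_le_two_mul_measureDiffSup :
    integralDiffSup α β ≤ 2 * measureDiffSup MeasurableSet α β := by
  refine Real.iSup_le (fun f => ?_) (by positivity [measureDiffSup_nonneg MeasurableSet α β])
  obtain ⟨E, hE, h⟩ := exists_measurableSet_abs_integral_sub_le α β f.2.1
    fun x => abs_le.2 (f.2.2 x)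
  linarith [le_measureDiffSup α β hE, le_measureDiffSup α β hE.compl]

lemma measureDiffSup_measurableSet_le {p : Set X → Prop} (hp : ∀ s, p s → MeasurableSet s)
    (hdense : ApproximatesMeasurableSets p) :
    measureDiffSup MeasurableSet α β ≤ measureDiffSup p α β := by
  refine Real.iSup_le (fun A => le_of_forall_pos_le_add fun ε hε => ?_)
    (measureDiffSup_nonneg p α β)
  obtain ⟨S, hS, hAS⟩ := hdense (α + β) A.2 (ENNReal.ofReal ε) (by simpa using hε)
  calc |α.real A - β.real A| ≤ |α.real S - β.real S| + (α + β).real (A ∆ S) :=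
        abs_measureReal_sub_le_add_measureReal_symmDiff α β A.2 (hp S hS)
    _ ≤ measureDiffSup p α β + ε :=
        add_le_add (le_measureDiffSup α β hS) (ENNReal.toReal_lt_of_lt_ofReal hAS).le

lemma integralDiffSup_le_two_mul_measureDiffSup_of_approximates {p : Set X → Prop}
    (hp : ∀ s, p s → MeasurableSet s) (hdense : ApproximatesMeasurableSets p) :
    integralDiffSup α β ≤ 2 * measureDiffSup p α β := by
  linarith [integralDiffSup_le_two_mul_measureDiffSup α β,
    measureDiffSup_measurableSet_le α β hp hdense]

end Suprema

end MeasurableSpace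

section Metric

variable {X : Type*} [PseudoMetricSpace X] [MeasurableSpace X] [BorelSpace X]

lemma exists_isOpen_isBounded_measure_compl_lt (ρ : Measure X) [IsFiniteMeasure ρ] {ε : ℝ≥0∞}
    (hε : ε ≠ 0) : ∃ B : Set X, IsOpen B ∧ Bornology.IsBounded B ∧ ρ Bᶜ < ε := by
  rcases isEmpty_or_nonempty X with hX | ⟨⟨x₀⟩⟩
  · exact ⟨∅, isOpen_empty, Bornology.isBounded_empty, by
      rw [Set.compl_empty, Set.univ_eq_empty_iff.2 hX, measure_empty]
      exact pos_iff_ne_zero.2 hε⟩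
  have hlim := tendsto_measure_iInter_atTop (μ := ρ) (s := fun n : ℕ => (Metric.ball x₀ n)ᶜ)
    (fun n : ℕ => measurableSet_ball.compl.nullMeasurableSet)
    (fun m n hmn => Set.compl_subset_compl.2 (Metric.ball_subset_ball (Nat.cast_le.2 hmn)))
    ⟨0, measure_ne_top _ _⟩
  rw [← Set.compl_iUnion, Metric.iUnion_ball_nat, Set.compl_univ, measure_empty] at hlim
  obtain ⟨n, hn⟩ := (hlim.eventually_lt_const (pos_iff_ne_zero.2 hε)).exists
  exact ⟨_, Metric.isOpen_ball, Metric.isBounded_ball, hn⟩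

lemma approximatesMeasurableSets_isClosed_isBounded :
    ApproximatesMeasurableSets fun s : Set X => IsClosed s ∧ Bornology.IsBounded s := by
  intro ρ _ A hA ε hε
  have hε2 := (ENNReal.half_pos hε).ne'
  obtain ⟨F, hFA, hF, hAF⟩ := hA.exists_isClosed_sdiff_lt (measure_ne_top ρ A) hε2
  obtain ⟨B, -, hB, hBc⟩ := exists_isOpen_isBounded_measure_compl_lt ρ hε2
  refine ⟨F ∩ closure B, ⟨hF.inter isClosed_closure, hB.closure.subset Set.inter_subset_right⟩, ?_⟩
  have hsub : A ∆ (F ∩ closure B) ⊆ A \ F ∪ Bᶜ := by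
    rw [symmDiff_of_ge (Set.inter_subset_left.trans hFA), Set.sdiff_inter]
    exact Set.union_subset_union_right _ fun x hx hxB => hx.2 (subset_closure hxB)
  calc ρ (A ∆ (F ∩ closure B)) ≤ ρ (A \ F) + ρ Bᶜ :=
        (measure_mono hsub).trans (measure_union_le _ _)
    _ < ε / 2 + ε / 2 := ENNReal.add_lt_add hAF hBc
    _ = ε := ENNReal.add_halves ε

lemma approximatesMeasurableSets_isOpen_isBounded :
    ApproximatesMeasurableSets fun s : Set X => IsOpen s ∧ Bornology.IsBounded s := by
  intro ρ _ A hA ε hε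
  have hε2 := (ENNReal.half_pos hε).ne'
  obtain ⟨U, hAU, hU, -, hUA⟩ := hA.exists_isOpen_sdiff_lt (measure_ne_top ρ A) hε2
  obtain ⟨B, hBo, hB, hBc⟩ := exists_isOpen_isBounded_measure_compl_lt ρ hε2
  refine ⟨U ∩ B, ⟨hU.inter hBo, hB.subset Set.inter_subset_right⟩, ?_⟩
  have hsub : A ∆ (U ∩ B) ⊆ U \ A ∪ Bᶜ := Set.union_subset
    (fun x hx => Or.inr fun hxB => hx.2 ⟨hAU hx.1, hxB⟩) (fun x hx => Or.inl ⟨hx.1.1, hx.2⟩)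
  calc ρ (A ∆ (U ∩ B)) ≤ ρ (U \ A) + ρ Bᶜ := (measure_mono hsub).trans (measure_union_le _ _)
    _ < ε / 2 + ε / 2 := ENNReal.add_lt_add hUA hBc
    _ = ε := ENNReal.add_halves ε

end Metric

end MeasureTheory

/-- On a metric space, total-variation convergence of finite Borel measures is equivalent to
uniform convergence over closed bounded sets, and to uniform convergence over open bounded
sets. -/
theorem stmt17 {X : Type*} [MetricSpace X] [MeasurableSpace X] [BorelSpace X]
    (ν : ℕ → Measure X) (μ : Measure X)
    (hν : ∀ n, IsFiniteMeasure (ν n)) (hμ : IsFiniteMeasure μ) :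
    List.TFAE
      [Tendsto (fun n => ⨆ f : {f : X → ℝ // Measurable f ∧ ∀ x, f x ∈ Set.Icc (-1 : ℝ) 1},
          |∫ x, f.1 x ∂(ν n) - ∫ x, f.1 x ∂μ|) atTop (𝓝 0),
       Tendsto (fun n => ⨆ A : {s : Set X // IsClosed s ∧ Bornology.IsBounded s},
          |((ν n) (A : Set X)).toReal - (μ (A : Set X)).toReal|) atTop (𝓝 0),
       Tendsto (fun n => ⨆ B : {s : Set X // IsOpen s ∧ Bornology.IsBounded s},
          |((ν n) (B : Set X)).toReal - (μ (B : Set X)).toReal|) atTop (𝓝 0)] := by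
  have key (p : Set X → Prop) (hp : ∀ s, p s → MeasurableSet s)
      (hdense : ApproximatesMeasurableSets p) :
      Tendsto (fun n => integralDiffSup (ν n) μ) atTop (𝓝 0) ↔
        Tendsto (fun n => measureDiffSup p (ν n) μ) atTop (𝓝 0) :=
    (tendsto_zero_iff_of_le_of_le_mul (fun n => measureDiffSup_nonneg p (ν n) μ)
      (fun n => measureDiffSup_le_integralDiffSup (ν n) μ hp)
      (fun n => integralDiffSup_le_two_mul_measureDiffSup_of_approximates (ν n) μ hp hdense)).symm
  tfae_have 1 ↔ 2 := key _ (fun s hs => hs.1.measurableSet)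
    approximatesMeasurableSets_isClosed_isBounded
  tfae_have 1 ↔ 3 := key _ (fun s hs => hs.1.measurableSet)
    approximatesMeasurableSets_isOpen_isBounded
  tfae_finish
end
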